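/- arXiv:2204.00841 — 2 statements merged into one kernel-verified Lean document; each statement's English description precedes it below -/
import Mathlib

section
/- For each p = (r, p¹, p², p³) on the forward light cone (r = |𝐩| > 0, (p¹)² + (p²)² ≠ 0), the four vectors w₁⁺(p) = (0, p²/√((p¹)²+(p²)²), -p¹/√((p¹)²+(p²)²), 0), w₁⁻(p) = (0, p¹p³/(√((p¹)²+(p²)²) r), p²p³/(√((p¹)²+(p²)²) r), -√((p¹)²+(p²)²)/r), w_{r⁻²}(p) = (1/√2)(1, p¹/r, p²/r, p³/r), w_{r²}(p) = (1/√2)(1, -p¹/r, -p²/r, -p³/r) form an orthonormal basis of ℂ⁴ with respect to the standard Hermitian inner product. -/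
noncomputable section

/-- `r = |𝐩|` for `p = (p⁰, p¹, p², p³)`. -/
def rr (p : Fin 4 → ℝ) : ℝ := Real.sqrt ((p 1) ^ 2 + (p 2) ^ 2 + (p 3) ^ 2)

/-- `ρ = √((p¹)² + (p²)²)`. -/
def rho (p : Fin 4 → ℝ) : ℝ := Real.sqrt ((p 1) ^ 2 + (p 2) ^ 2)

/-- `w₁⁺(p)` as a vector of `ℂ⁴`. -/
def w1plus (p : Fin 4 → ℝ) : EuclideanSpace ℂ (Fin 4) :=
  (WithLp.equiv 2 (Fin 4 → ℂ)).symm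
    ![0, (p 2 / rho p : ℝ), (-(p 1) / rho p : ℝ), 0]

/-- `w₁⁻(p)` as a vector of `ℂ⁴`. -/
def w1minus (p : Fin 4 → ℝ) : EuclideanSpace ℂ (Fin 4) :=
  (WithLp.equiv 2 (Fin 4 → ℂ)).symm
    ![0, (p 1 * p 3 / (rho p * rr p) : ℝ), (p 2 * p 3 / (rho p * rr p) : ℝ),
      (-(rho p) / rr p : ℝ)]

/-- `w_{r⁻²}(p)` as a vector of `ℂ⁴`. -/
def wrinv (p : Fin 4 → ℝ) : EuclideanSpace ℂ (Fin 4) :=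
  (WithLp.equiv 2 (Fin 4 → ℂ)).symm
    ![(1 / Real.sqrt 2 : ℝ), (p 1 / (Real.sqrt 2 * rr p) : ℝ),
      (p 2 / (Real.sqrt 2 * rr p) : ℝ), (p 3 / (Real.sqrt 2 * rr p) : ℝ)]

/-- `w_{r²}(p)` as a vector of `ℂ⁴`. -/
def wr (p : Fin 4 → ℝ) : EuclideanSpace ℂ (Fin 4) :=
  (WithLp.equiv 2 (Fin 4 → ℂ)).symm
    ![(1 / Real.sqrt 2 : ℝ), (-(p 1) / (Real.sqrt 2 * rr p) : ℝ),
      (-(p 2) / (Real.sqrt 2 * rr p) : ℝ), (-(p 3) / (Real.sqrt 2 * rr p) : ℝ)]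

/-! The spatial parts `e₁, e₂` of `w₁⁺, w₁⁻` and `𝐧 = 𝐩 / r` are, up to the sign of `e₁`, the
spherical-coordinate frame `(e_φ, e_θ, e_r)` of `ℝ³`, an orthonormal triple. Lifting it to `ℝ⁴`
as `(0, e₁)`, `(0, e₂)`, `(1, ±𝐧) / √2` keeps it orthonormal: `(1, 𝐧) ⬝ (1, -𝐧) = 1 - |𝐧|² = 0`.
All four vectors are real, so the Hermitian product on `ℂ⁴` agrees with the Euclidean one, and
four orthonormal vectors in `ℂ⁴` are a basis. -/

section Complexify

variable {ι n : Type*} [Fintype n]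

def EuclideanSpace.complexify (v : EuclideanSpace ℝ n) : EuclideanSpace ℂ n :=
  WithLp.toLp 2 fun k => (v k : ℂ)

theorem EuclideanSpace.inner_complexify (u v : EuclideanSpace ℝ n) :
    inner ℂ u.complexify v.complexify = (inner ℝ u v : ℂ) := by
  simp [EuclideanSpace.complexify, PiLp.inner_apply, mul_comm]

theorem Orthonormal.complexify {v : ι → EuclideanSpace ℝ n} (hv : Orthonormal ℝ v) :
    Orthonormal ℂ fun i => (v i).complexify := by
  classical
  rw [orthonormal_iff_ite] at hv ⊢
  intro i j
  rw [EuclideanSpace.inner_complexify, hv]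
  split_ifs <;> simp

end Complexify

section Cons

variable {n : ℕ}

def EuclideanSpace.cons (t : ℝ) (u : EuclideanSpace ℝ (Fin n)) : EuclideanSpace ℝ (Fin (n + 1)) :=
  WithLp.toLp 2 (Fin.cons t u)

theorem EuclideanSpace.inner_cons (s t : ℝ) (u v : EuclideanSpace ℝ (Fin n)) :
    inner ℝ (cons s u) (cons t v) = s * t + inner ℝ u v := by
  simp [EuclideanSpace.cons, PiLp.inner_apply, Fin.sum_univ_succ, mul_comm]

theorem orthonormal_lightConeLift {e₁ e₂ m : EuclideanSpace ℝ (Fin n)}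
    (h : Orthonormal ℝ ![e₁, e₂, m]) :
    Orthonormal ℝ ![EuclideanSpace.cons 0 e₁, EuclideanSpace.cons 0 e₂,
      (√2)⁻¹ • EuclideanSpace.cons 1 m, (√2)⁻¹ • EuclideanSpace.cons 1 (-m)] := by
  rw [orthonormal_iff_ite] at h ⊢
  have h11 : inner ℝ e₁ e₁ = 1 := by simpa using h 0 0
  have h22 : inner ℝ e₂ e₂ = 1 := by simpa using h 1 1
  have hmm : inner ℝ m m = 1 := by simpa using h 2 2
  have h12 : inner ℝ e₁ e₂ = 0 := by simpa using h 0 1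
  have h1m : inner ℝ e₁ m = 0 := by simpa using h 0 2
  have h2m : inner ℝ e₂ m = 0 := by simpa using h 1 2
  intro i j
  fin_cases i <;> fin_cases j <;>
    simp [real_inner_smul_left, real_inner_smul_right, EuclideanSpace.inner_cons,
      -inner_self_eq_norm_sq_to_K, h11, h22, hmm, h12, h1m, h2m, real_inner_comm e₁ e₂,
      real_inner_comm e₁ m, real_inner_comm e₂ m] <;>
    field_simp <;>
    norm_num

end Cons

theorem orthonormal_sphericalFrame {a b c s r : ℝ} (hs : s ^ 2 = a ^ 2 + b ^ 2)
    (hr : r ^ 2 = s ^ 2 + c ^ 2) (hs0 : s ≠ 0) :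
    Orthonormal ℝ ![!₂[b / s, -a / s, 0], !₂[a * c / (s * r), b * c / (s * r), -s / r],
      !₂[a / r, b / r, c / r]] := by
  have hr0 : r ≠ 0 := by
    have : r ^ 2 ≠ 0 := by rw [hr]; positivity
    simpa using this
  rw [orthonormal_iff_ite]
  intro i j
  fin_cases i <;> fin_cases j <;>
    simp [PiLp.inner_apply, Fin.sum_univ_three, -inner_self_eq_norm_sq_to_K] <;>
    field_simp <;>
    grind

theorem w_orthonormal_basis_general (p : Fin 4 → ℝ)
    (hrho : (p 1) ^ 2 + (p 2) ^ 2 ≠ 0) :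
    Orthonormal ℂ ![w1plus p, w1minus p, wrinv p, wr p] ∧
    Submodule.span ℂ (Set.range ![w1plus p, w1minus p, wrinv p, wr p]) = ⊤ := by
  have hρ : rho p ^ 2 = p 1 ^ 2 + p 2 ^ 2 := Real.sq_sqrt (by positivity)
  have hr : rr p ^ 2 = rho p ^ 2 + p 3 ^ 2 := by rw [hρ]; exact Real.sq_sqrt (by positivity)
  have hρ0 : rho p ≠ 0 := fun h => hrho (by rw [← hρ, h]; ring)
  have horth : Orthonormal ℂ ![w1plus p, w1minus p, wrinv p, wr p] := by
    convert (orthonormal_lightConeLift (orthonormal_sphericalFrame hρ hr hρ0)).complexify using 1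
    funext i
    fin_cases i <;> ext k <;> fin_cases k <;>
      simp [w1plus, w1minus, wrinv, wr, EuclideanSpace.complexify, EuclideanSpace.cons] <;>
      ring
  exact ⟨horth, horth.linearIndependent.span_eq_top_of_card_eq_finrank (by simp)⟩

/-- For `p` on the forward light cone with `r = |𝐩| > 0` and `(p¹)² + (p²)² ≠ 0`,
the four vectors `w₁⁺(p), w₁⁻(p), w_{r⁻²}(p), w_{r²}(p)` form an orthonormal
basis of `ℂ⁴` for the standard Hermitian inner product. -/
theorem w_orthonormal_basis (p : Fin 4 → ℝ)
    (hcone : p 0 = rr p) (hr : 0 < rr p) (hrho : (p 1) ^ 2 + (p 2) ^ 2 ≠ 0) :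
    Orthonormal ℂ ![w1plus p, w1minus p, wrinv p, wr p] ∧
    Submodule.span ℂ (Set.range ![w1plus p, w1minus p, wrinv p, wr p]) = ⊤ :=
  w_orthonormal_basis_general p hrho

end
end

section
/- If K : X × X → ℝ is a symmetric conditionally negative definite kernel with K(x,x) = 0, then there exist a complex Hilbert space H and a map f : X → H such that K(x,y) = ‖f(x) - f(y)‖² for all x, y ∈ X. -/
open scoped ComplexOrder

/-!
Schoenberg's construction. On the finitely supported functions `u : X →₀ ℂ` of total mass zero,
`⟪u, v⟫ = -½ ∑ conj (u x) v y K(x, y)` is a positive semidefinite Hermitian form: positivity is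
exactly conditional negative definiteness. Completing its separation quotient gives the Hilbert
space, and `f x = δₓ - δₓ₀` works because `δₓ - δ_y` has mass zero and
`‖δₓ - δ_y‖² = -½ (K(x, x) + K(y, y) - 2 K(x, y)) = K(x, y)`.
-/

open Finsupp

variable {X : Type*}

def IsCondNegDef (k : X → X → ℂ) : Prop :=
  ∀ (n : ℕ) (x : Fin n → X) (α : Fin n → ℂ),
    ∑ i, α i = 0 → ∑ i, ∑ j, starRingEnd ℂ (α i) * α j * k (x i) (x j) ≤ 0

noncomputable def kernelForm (k : X → X → ℂ) : (X →₀ ℂ) →ₗ⋆[ℂ] (X →₀ ℂ) →ₗ[ℂ] ℂ :=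
  LinearMap.mk₂'ₛₗ (starRingEnd ℂ) (RingHom.id ℂ)
    (fun u v => u.sum fun x a => v.sum fun y b => starRingEnd ℂ a * b * k x y)
    (fun _ _ _ => sum_add_index' (by simp) (by simp [add_mul, sum_add]))
    (fun _ _ _ => by rw [sum_smul_index' (by simp)]; simp [mul_sum, mul_assoc])
    (fun _ _ _ => by
      rw [← sum_add]
      exact sum_congr fun _ _ => sum_add_index' (by simp) (by simp [mul_add, add_mul]))
    (fun _ _ _ => by
      simp only [RingHom.id_apply, smul_eq_mul, mul_sum]
      exact sum_congr fun _ _ => by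
        rw [sum_smul_index' (by simp)]
        exact sum_congr fun _ _ => by ring)

theorem kernelForm_apply (k : X → X → ℂ) (u v : X →₀ ℂ) :
    kernelForm k u v = u.sum fun x a => v.sum fun y b => starRingEnd ℂ a * b * k x y :=
  rfl

theorem kernelForm_single_single (k : X → X → ℂ) (x y : X) (a b : ℂ) :
    kernelForm k (single x a) (single y b) = starRingEnd ℂ a * b * k x y := by
  simp [kernelForm_apply, sum_single_index]

theorem kernelForm_single_sub_single_self (k : X → X → ℂ) (x y : X) :
    kernelForm k (single x 1 - single y 1) (single x 1 - single y 1) =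
      k x x + k y y - k x y - k y x := by
  simp only [map_sub, LinearMap.sub_apply, kernelForm_single_single, map_one, one_mul]
  ring

theorem conj_kernelForm {k : X → X → ℂ} (hk : ∀ x y, starRingEnd ℂ (k x y) = k y x)
    (u v : X →₀ ℂ) : starRingEnd ℂ (kernelForm k u v) = kernelForm k v u := by
  simp only [kernelForm_apply, map_finsuppSum, map_mul, hk, Complex.conj_conj]
  rw [sum_comm]
  exact sum_congr fun _ _ => sum_congr fun _ _ => by ring

theorem IsCondNegDef.kernelForm_self_nonpos {k : X → X → ℂ} (hk : IsCondNegDef k)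
    {u : X →₀ ℂ} (hu : (u.sum fun _ a => a) = 0) : kernelForm k u u ≤ 0 := by
  let e := u.support.equivFin.symm
  have sum_e (g : X → ℂ) : ∑ i, g (e i) = ∑ x ∈ u.support, g x := by
    rw [Equiv.sum_comp e (fun z => g z), Finset.sum_coe_sort]
  have hform : kernelForm k u u =
      ∑ i, ∑ j, starRingEnd ℂ (u (e i)) * u (e j) * k (e i) (e j) := by
    rw [kernelForm_apply, Finsupp.sum, ← sum_e]
    exact Finset.sum_congr rfl fun i _ => by rw [Finsupp.sum, ← sum_e]
  exact hform ▸ hk _ (fun i => e i) (fun i => u (e i)) (by rw [sum_e]; exact hu)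

noncomputable def sumZero (X : Type*) : Submodule ℂ (X →₀ ℂ) :=
  LinearMap.ker (linearCombination ℂ fun _ : X => (1 : ℂ))

theorem mem_sumZero {u : X →₀ ℂ} : u ∈ sumZero X ↔ (u.sum fun _ a => a) = 0 := by
  simp [sumZero, linearCombination_apply]

section CondNegDefCore

variable {k : X → X → ℂ} (hherm : ∀ x y, starRingEnd ℂ (k x y) = k y x) (hk : IsCondNegDef k)

noncomputable abbrev condNegDefCore : PreInnerProductSpace.Core ℂ (sumZero X) where
  inner u v := -kernelForm k u v / 2
  conj_inner_symm u v := by simp [conj_kernelForm hherm, map_ofNat]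
  re_inner_nonneg u := by
    have := (Complex.le_def.mp (hk.kernelForm_self_nonpos (mem_sumZero.mp u.2))).1
    simp only [RCLike.re_to_complex, Complex.div_ofNat_re, Complex.neg_re,
      Complex.zero_re] at this ⊢
    linarith
  add_left u u' v := by
    simp only [Submodule.coe_add, map_add, LinearMap.add_apply]
    ring
  smul_left u v r := by
    simp only [SetLike.val_smul, LinearMap.map_smulₛₗ, LinearMap.smul_apply, smul_eq_mul]
    ring

theorem condNegDefCore_inner (u v : sumZero X) :
    (condNegDefCore hherm hk).inner u v = -kernelForm k u v / 2 :=
  rfl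

end CondNegDefCore

theorem PreInnerProductSpace.Core.exists_linearMap_hilbert {F : Type} [AddCommGroup F]
    [Module ℂ F] (c : PreInnerProductSpace.Core ℂ F) :
    ∃ (H : Type) (_ : NormedAddCommGroup H) (_ : InnerProductSpace ℂ H) (_ : CompleteSpace H)
      (g : F →ₗ[ℂ] H), ∀ u, ‖g u‖ ^ 2 = (c.inner u u).re := by
  let _ : PreInnerProductSpace.Core ℂ F := c
  let _ := InnerProductSpace.Core.toSeminormedAddCommGroup (𝕜 := ℂ) (F := F)
  let _ := InnerProductSpace.ofCore c
  refine ⟨UniformSpace.Completion (SeparationQuotient F), inferInstance, inferInstance,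
    inferInstance, UniformSpace.Completion.toComplL.comp (SeparationQuotient.mkCLM ℂ F),
    fun u => ?_⟩
  simp only [ContinuousLinearMap.coe_coe, ContinuousLinearMap.comp_apply,
    UniformSpace.Completion.coe_toComplL, SeparationQuotient.mkCLM_apply,
    UniformSpace.Completion.norm_coe, SeparationQuotient.norm_mk]
  exact norm_sq_eq_re_inner (𝕜 := ℂ) u

/-- A symmetric conditionally negative definite kernel vanishing on the diagonal
is of the form `K(x,y) = ‖f(x) - f(y)‖²` for some map `f` into a complex
Hilbert space. -/
theorem cnd_kernel_eq_dist_sq {X : Type} (K : X → X → ℝ)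
    (hsymm : ∀ x y, K x y = K y x)
    (hdiag : ∀ x, K x x = 0)
    (hcnd : ∀ (n : ℕ) (x : Fin n → X) (α : Fin n → ℂ),
      ∑ i, α i = 0 →
      ∑ i, ∑ j, (starRingEnd ℂ) (α i) * α j * (K (x i) (x j) : ℂ) ≤ 0) :
    ∃ (H : Type) (_ : NormedAddCommGroup H) (_ : InnerProductSpace ℂ H)
      (_ : CompleteSpace H) (f : X → H),
      ∀ x y, K x y = ‖f x - f y‖ ^ 2 := by
  rcases isEmpty_or_nonempty X with _ | ⟨⟨x₀⟩⟩
  · exact ⟨ℂ, inferInstance, inferInstance, inferInstance, isEmptyElim, isEmptyElim⟩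
  have hherm (x y : X) : starRingEnd ℂ (K x y : ℂ) = K y x := by
    rw [Complex.conj_ofReal, hsymm]
  obtain ⟨H, _, _, _, g, hg⟩ := (condNegDefCore hherm hcnd).exists_linearMap_hilbert
  let δ (x : X) : sumZero X := ⟨single x 1 - single x₀ 1, by simp [mem_sumZero, sum_sub_index]⟩
  refine ⟨H, inferInstance, inferInstance, inferInstance, fun x => g (δ x), fun x y => ?_⟩
  have hδ : ((δ x - δ y : sumZero X) : X →₀ ℂ) = single x 1 - single y 1 := by simp [δ]
  rw [← map_sub, hg, condNegDefCore_inner hherm hcnd, hδ, kernelForm_single_sub_single_self,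
    hdiag, hdiag, hsymm y x]
  simp
end
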